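/- arXiv:2601.14890 — 4 statements merged into one kernel-verified Lean document; each statement's English description precedes it below -/
import Mathlib

section
/- Let a, b, c, d, e be real numbers with b ≠ 0, let γ > -1/2, and let h ∈ L¹_γ(ℝ₊). Then for every t ∈ [0,∞), |B^{a,b,c}_{d,e,γ}[h](t)| ≤ (c_γ / |b|^{γ+1}) ‖h‖_{γ,1}. -/
open MeasureTheory Set Complex ENNReal

noncomputable section

/-- Normalized Bessel function `j_γ`. -/
def normBesselJ (γ : ℝ) (x : ℝ) : ℝ :=
  Real.Gamma (γ + 1) *
    ∑' n : ℕ, (-1 : ℝ) ^ n * (x / 2) ^ (2 * n) / ((n.factorial : ℝ) * Real.Gamma ((n : ℝ) + γ + 1))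

/-- The constant `c_γ = 1/(2^γ Γ(γ+1))`. -/
def cGamma (γ : ℝ) : ℝ := 1 / ((2 : ℝ) ^ γ * Real.Gamma (γ + 1))

/-- The quadratic-phase Fourier–Bessel kernel `J^{a,b,c}_{d,e,γ}(t,s)`. -/
def qpKernel (a b c d e γ : ℝ) (t s : ℝ) : ℂ :=
  Complex.exp (-Complex.I * ((a * s ^ 2 + c * t ^ 2 + d * s + e * t : ℝ) : ℂ)) *
    ((normBesselJ γ (s * t / b) : ℝ) : ℂ)

/-- The quadratic-phase Fourier–Bessel transform `B^{a,b,c}_{d,e,γ}[h]`. -/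
def qpFB (a b c d e γ : ℝ) (h : ℝ → ℂ) (t : ℝ) : ℂ :=
  ((cGamma γ : ℝ) : ℂ) / (Complex.I * (b : ℂ)) ^ ((γ : ℂ) + 1) *
    ∫ s in Ioi (0 : ℝ), qpKernel a b c d e γ t s * h s * ((s ^ (2 * γ + 1) : ℝ) : ℂ)

/-- The weighted measure `s^{2γ+1} ds` on `(0,∞)`; `L^p_γ(ℝ₊) = ℒ^p(muGamma γ)`
and `‖·‖_{γ,p} = eLpNorm · p (muGamma γ)`. -/
def muGamma (γ : ℝ) : Measure ℝ :=
  (volume.restrict (Ioi (0 : ℝ))).withDensity fun s => ENNReal.ofReal (s ^ (2 * γ + 1))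

/-- The Fourier–Bessel (Hankel-type) transform `𝓑_γ[h]`. -/
def fourierBessel (γ : ℝ) (h : ℝ → ℂ) (t : ℝ) : ℂ :=
  ((cGamma γ : ℝ) : ℂ) *
    ∫ s in Ioi (0 : ℝ), ((normBesselJ γ (s * t) : ℝ) : ℂ) * h s * ((s ^ (2 * γ + 1) : ℝ) : ℂ)

/-- Area of a triangle with side lengths `s, t, u`. -/
def triArea (s t u : ℝ) : ℝ :=
  1 / 4 * Real.sqrt ((s + t + u) * (s + t - u) * (s - t + u) * (t + u - s))

/-- The kernel `W_γ(s,t,u)` of the Fourier–Bessel translation. -/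
def Wker (γ : ℝ) (s t u : ℝ) : ℝ :=
  if |s - t| ≤ u ∧ u ≤ s + t then
    (2 : ℝ) ^ (2 * γ - 1) * Real.Gamma (γ + 1) / (Real.sqrt Real.pi * Real.Gamma (γ + 1 / 2)) *
      triArea s t u ^ (2 * γ - 1) / (s * t * u) ^ (2 * γ)
  else 0

/-- The quadratic-phase kernel `W^{a,b,d}_γ(s,t,u)`. -/
def Wabd (a b d γ : ℝ) (s t u : ℝ) : ℂ :=
  ((Wker γ s t u : ℝ) : ℂ) *
    Complex.exp (-Complex.I * ((a * (s ^ 2 + t ^ 2 + u ^ 2) + d * (s + t + u) : ℝ) : ℂ))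

/-- The quadratic-phase Fourier–Bessel translation operator `T^{a,b,d}_{t,γ}[h](s)`. -/
def qpTranslate (a b d γ : ℝ) (t : ℝ) (h : ℝ → ℂ) (s : ℝ) : ℂ :=
  ∫ u in Ioi (0 : ℝ),
    h u * Wabd a b d γ s t u * Complex.exp (Complex.I * ((a * u ^ 2 + d * u : ℝ) : ℂ)) *
      ((u ^ (2 * γ + 1) : ℝ) : ℂ)

/-- The quadratic-phase Fourier–Bessel convolution `h ⋆ g`. -/
def qpConv (a b d γ : ℝ) (h g : ℝ → ℂ) (t : ℝ) : ℂ :=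
  ∫ s in Ioi (0 : ℝ),
    qpTranslate a b d γ t h s * g s * Complex.exp (Complex.I * ((a * s ^ 2 + d * s : ℝ) : ℂ)) *
      ((s ^ (2 * γ + 1) : ℝ) : ℂ)

end

/-!
The kernel has modulus at most one because `|j_γ| ≤ 1`, which follows from Poisson's integral
`j_γ(x) ∫₀^π sin^{2γ} θ dθ = ∫₀^π cos (x cos θ) sin^{2γ} θ dθ`: expanding `cos` in its power
series and integrating term by term, the moments `∫₀^π cos^{2n} θ sin^{2γ} θ dθ` obey a two-term
recursion (integration by parts) that reproduces the coefficients of `j_γ`. Then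
`‖∫ K h dμ_γ‖ ≤ ‖h‖_{γ,1}` and `‖(i b)^{γ+1}‖ = |b|^{γ+1}` give the bound.
-/

open scoped Real

lemma two_div_pi_mul_min_le_sin {θ : ℝ} (hθ : θ ∈ Ioo 0 π) :
    2 / π * min θ (π - θ) ≤ Real.sin θ := by
  rcases le_total θ (π / 2) with hle | hle
  · rw [min_eq_left (by linarith)]
    exact Real.mul_le_sin hθ.1.le hle
  · rw [min_eq_right (by linarith), ← Real.sin_pi_sub]
    exact Real.mul_le_sin (by linarith [hθ.2]) (by linarith)

lemma sin_rpow_nonneg {θ : ℝ} (hθ : θ ∈ Ioo 0 π) (p : ℝ) : 0 ≤ Real.sin θ ^ p :=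
  Real.rpow_nonneg (Real.sin_nonneg_of_mem_Icc (Ioo_subset_Icc_self hθ)) p

lemma norm_mul_sin_rpow_le {θ u : ℝ} (hθ : θ ∈ Ioo 0 π) (hu : |u| ≤ 1) (p : ℝ) :
    ‖u * Real.sin θ ^ p‖ ≤ Real.sin θ ^ p := by
  rw [norm_mul, Real.norm_of_nonneg (sin_rpow_nonneg hθ p)]
  exact mul_le_of_le_one_left (sin_rpow_nonneg hθ p) hu

lemma integrableOn_sin_rpow {p : ℝ} (hp : -1 < p) :
    IntegrableOn (fun θ => Real.sin θ ^ p) (Ioo 0 π) := by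
  have hmeas : AEStronglyMeasurable (fun θ => Real.sin θ ^ p) (volume.restrict (Ioo 0 π)) :=
    (Real.measurable_sin.pow_const p).aestronglyMeasurable
  rcases le_or_gt 0 p with hp0 | hp0
  · refine Integrable.mono' (integrable_const 1) hmeas ?_
    filter_upwards [ae_restrict_mem measurableSet_Ioo] with θ hθ
    rw [Real.norm_of_nonneg (sin_rpow_nonneg hθ p)]
    exact Real.rpow_le_one (Real.sin_nonneg_of_mem_Icc (Ioo_subset_Icc_self hθ))
      (Real.sin_le_one θ) hp0
  -- For `p < 0`, Jordan's inequality gives `sin θ ^ p ≤ (2/π) ^ p * (θ ^ p + (π - θ) ^ p)`.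
  have hleft : IntegrableOn (fun θ : ℝ => θ ^ p) (Ioo 0 π) :=
    (intervalIntegrable_iff_integrableOn_Ioo_of_le Real.pi_pos.le).1
      (intervalIntegral.intervalIntegrable_rpow' hp)
  have hright : IntegrableOn (fun θ : ℝ => (π - θ) ^ p) (Ioo 0 π) := by
    have := (intervalIntegral.intervalIntegrable_rpow' (a := 0) (b := π) hp).comp_sub_left π
    rw [sub_zero, sub_self, intervalIntegrable_iff] at this
    simpa [uIoc_of_ge Real.pi_pos.le, integrableOn_Ioc_iff_integrableOn_Ioo] using this
  refine Integrable.mono' ((hleft.add hright).const_mul ((2 / π) ^ p)) hmeas ?_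
  filter_upwards [ae_restrict_mem measurableSet_Ioo] with θ hθ
  have hθ₁ : 0 < θ := hθ.1
  have hθ₂ : 0 < π - θ := by linarith [hθ.2]
  rw [Real.norm_of_nonneg (sin_rpow_nonneg hθ p)]
  calc Real.sin θ ^ p ≤ (2 / π * min θ (π - θ)) ^ p :=
        Real.rpow_le_rpow_of_nonpos (by positivity) (two_div_pi_mul_min_le_sin hθ) hp0.le
    _ = (2 / π) ^ p * min θ (π - θ) ^ p := Real.mul_rpow (by positivity) (by positivity)
    _ ≤ (2 / π) ^ p * (θ ^ p + (π - θ) ^ p) := by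
        gcongr
        rcases min_cases θ (π - θ) with ⟨hmin, -⟩ | ⟨hmin, -⟩ <;> rw [hmin]
        · exact le_add_of_nonneg_right (Real.rpow_nonneg hθ₂.le p)
        · exact le_add_of_nonneg_left (Real.rpow_nonneg hθ₁.le p)

lemma integrableOn_cos_pow_mul_sin_rpow {p : ℝ} (hp : -1 < p) (k : ℕ) :
    IntegrableOn (fun θ => Real.cos θ ^ k * Real.sin θ ^ p) (Ioo 0 π) := by
  refine Integrable.mono' (integrableOn_sin_rpow hp) ((Real.measurable_cos.pow_const k).mul
    (Real.measurable_sin.pow_const p)).aestronglyMeasurable ?_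
  filter_upwards [ae_restrict_mem measurableSet_Ioo] with θ hθ
  refine norm_mul_sin_rpow_le hθ ?_ p
  rw [abs_pow]
  exact pow_le_one₀ (abs_nonneg _) (Real.abs_cos_le_one θ)

noncomputable def cosSinMoment (k : ℕ) (p : ℝ) : ℝ :=
  ∫ θ in Ioo 0 π, Real.cos θ ^ k * Real.sin θ ^ p

lemma cosSinMoment_zero_pos {p : ℝ} (hp : -1 < p) : 0 < cosSinMoment 0 p := by
  rw [cosSinMoment, ← integral_Ioc_eq_integral_Ioo,
    ← intervalIntegral.integral_of_le Real.pi_pos.le]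
  refine intervalIntegral.intervalIntegral_pos_of_pos_on ?_ (fun θ hθ => ?_) Real.pi_pos
  · exact (intervalIntegrable_iff_integrableOn_Ioo_of_le Real.pi_pos.le).2
      (integrableOn_cos_pow_mul_sin_rpow hp 0)
  · simpa using Real.rpow_pos_of_pos (Real.sin_pos_of_pos_of_lt_pi hθ.1 hθ.2) p

/-- Integration by parts against `d/dθ (cos θ ^ (k + 1) * sin θ ^ (p + 1))`. -/
lemma cosSinMoment_add_two {p : ℝ} (hp : -1 < p) (k : ℕ) :
    (k + p + 2) * cosSinMoment (k + 2) p = (k + 1) * cosSinMoment k p := by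
  set F : ℝ → ℝ := fun θ => Real.cos θ ^ (k + 1) * Real.sin θ ^ (p + 1)
  set F' : ℝ → ℝ := fun θ =>
    (k + p + 2) * (Real.cos θ ^ (k + 2) * Real.sin θ ^ p) -
      (k + 1) * (Real.cos θ ^ k * Real.sin θ ^ p)
  have hF' : ∀ θ ∈ Ioo 0 π, HasDerivAt F (F' θ) θ := by
    intro θ hθ
    have hsin : 0 < Real.sin θ := Real.sin_pos_of_pos_of_lt_pi hθ.1 hθ.2
    refine (((Real.hasDerivAt_cos θ).fun_pow (k + 1)).fun_mul
      ((Real.hasDerivAt_sin θ).rpow_const (p := p + 1) (Or.inl hsin.ne'))).congr_deriv ?_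
    rw [add_sub_cancel_right, Real.rpow_add_one hsin.ne', add_tsub_cancel_right]
    push_cast
    have := Real.sin_sq_add_cos_sq θ
    linear_combination (-(k + 1) * Real.cos θ ^ k * Real.sin θ ^ p) * this
  have hcont : ContinuousOn F (Icc 0 π) :=
    ((Real.continuous_cos.pow _).mul
      (Real.continuous_sin.rpow_const fun _ => Or.inr (by linarith))).continuousOn
  have hint₂ := integrableOn_cos_pow_mul_sin_rpow hp (k + 2)
  have hint₀ := integrableOn_cos_pow_mul_sin_rpow hp k
  have hFTC := intervalIntegral.integral_eq_sub_of_hasDerivAt_of_le Real.pi_pos.le hcont hF'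
    ((intervalIntegrable_iff_integrableOn_Ioo_of_le Real.pi_pos.le).2
      ((hint₂.const_mul _).sub (hint₀.const_mul _)))
  have hFπ : F π = 0 := by simp [F, Real.zero_rpow (by linarith : p + 1 ≠ 0)]
  have hF0 : F 0 = 0 := by simp [F, Real.zero_rpow (by linarith : p + 1 ≠ 0)]
  rw [intervalIntegral.integral_of_le Real.pi_pos.le, integral_Ioc_eq_integral_Ioo,
    integral_sub (hint₂.const_mul _) (hint₀.const_mul _), integral_const_mul,
    integral_const_mul, hFπ, hF0, sub_zero] at hFTC
  rw [cosSinMoment, cosSinMoment]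
  linarith

lemma cosSinMoment_two_mul {γ : ℝ} (hγ : -(1 / 2) < γ) (n : ℕ) :
    4 ^ n * n.factorial * Real.Gamma (n + γ + 1) * cosSinMoment (2 * n) (2 * γ) =
      Real.Gamma (γ + 1) * (2 * n).factorial * cosSinMoment 0 (2 * γ) := by
  induction n with
  | zero => simp
  | succ n ih =>
    have hrec := cosSinMoment_add_two (p := 2 * γ) (by linarith) (2 * n)
    have hGamma : Real.Gamma (↑(n + 1) + γ + 1) = (n + γ + 1) * Real.Gamma (n + γ + 1) := by
      rw [← Real.Gamma_add_one (by linarith [n.cast_nonneg (α := ℝ)])]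
      push_cast
      ring_nf
    rw [hGamma, show 2 * (n + 1) = 2 * n + 2 by ring, Nat.factorial_succ,
      show 2 * n + 2 = (2 * n + 1) + 1 by ring, Nat.factorial_succ, Nat.factorial_succ]
    push_cast at hrec ⊢
    linear_combination (2 * ((n : ℝ) + 1) * (2 * n + 1)) * ih +
      (2 * 4 ^ n * n.factorial * ((n : ℝ) + 1) * Real.Gamma (n + γ + 1)) * hrec

/-- Poisson's integral representation of the normalized Bessel function. -/
lemma integral_cos_mul_cos_mul_sin_rpow {γ : ℝ} (hγ : -(1 / 2) < γ) (x : ℝ) :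
    ∫ θ in Ioo 0 π, Real.cos (x * Real.cos θ) * Real.sin θ ^ (2 * γ) =
      cosSinMoment 0 (2 * γ) * normBesselJ γ x := by
  have hp : -1 < 2 * γ := by linarith
  set c : ℕ → ℝ := fun n => (-1) ^ n * x ^ (2 * n) / (2 * n).factorial
  set F : ℕ → ℝ → ℝ := fun n θ => c n * (Real.cos θ ^ (2 * n) * Real.sin θ ^ (2 * γ))
  have hF_int : ∀ n, IntegrableOn (F n) (Ioo 0 π) := fun n =>
    (integrableOn_cos_pow_mul_sin_rpow hp (2 * n)).const_mul (c n)
  have hc_sum : Summable fun n => |c n| := by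
    refine ((Real.summable_pow_div_factorial |x|).comp_injective
      (fun a b hab => by simp only at hab; omega : Function.Injective (2 * ·))).congr fun n => ?_
    simp [c, abs_div, abs_mul, abs_pow]
  have hF_sum : Summable fun n => ∫ θ in Ioo 0 π, ‖F n θ‖ := by
    refine Summable.of_nonneg_of_le (fun n => integral_nonneg fun _ => norm_nonneg _)
      (fun n => ?_) (hc_sum.mul_right (cosSinMoment 0 (2 * γ)))
    rw [cosSinMoment, ← integral_const_mul]
    refine integral_mono_of_nonneg (.of_forall fun _ => norm_nonneg _)
      ((integrableOn_cos_pow_mul_sin_rpow hp 0).const_mul _) ?_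
    filter_upwards [ae_restrict_mem measurableSet_Ioo] with θ hθ
    rw [norm_mul, pow_zero, one_mul, Real.norm_eq_abs]
    gcongr
    refine norm_mul_sin_rpow_le hθ ?_ _
    rw [abs_pow]
    exact pow_le_one₀ (abs_nonneg _) (Real.abs_cos_le_one θ)
  have hseries : ∀ θ, HasSum (fun n => F n θ)
      (Real.cos (x * Real.cos θ) * Real.sin θ ^ (2 * γ)) := fun θ => by
    simpa [F, c, mul_pow, mul_div_right_comm, mul_assoc] using
      (Real.hasSum_cos (x * Real.cos θ)).mul_right (Real.sin θ ^ (2 * γ))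
  have hterm : ∀ n, ∫ θ in Ioo 0 π, F n θ = cosSinMoment 0 (2 * γ) * (Real.Gamma (γ + 1) *
      ((-1) ^ n * (x / 2) ^ (2 * n) / (n.factorial * Real.Gamma (n + γ + 1)))) := by
    intro n
    have hM := cosSinMoment_two_mul hγ n
    have hΓ : Real.Gamma (n + γ + 1) ≠ 0 :=
      (Real.Gamma_pos_of_pos (by linarith [n.cast_nonneg (α := ℝ)])).ne'
    have hx : (x / 2) ^ (2 * n) = x ^ (2 * n) / 4 ^ n := by
      rw [div_pow, pow_mul 2 2 n]
      norm_num
    rw [integral_const_mul, ← cosSinMoment, hx]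
    simp only [c]
    field_simp
    linear_combination x ^ (2 * n) * hM
  calc ∫ θ in Ioo 0 π, Real.cos (x * Real.cos θ) * Real.sin θ ^ (2 * γ)
      = ∫ θ in Ioo 0 π, ∑' n, F n θ :=
        integral_congr_ae (.of_forall fun θ => (hseries θ).tsum_eq.symm)
    _ = ∑' n, ∫ θ in Ioo 0 π, F n θ :=
        (integral_tsum_of_summable_integral_norm hF_int hF_sum).symm
    _ = cosSinMoment 0 (2 * γ) * normBesselJ γ x := by
        simp_rw [hterm]
        rw [tsum_mul_left, tsum_mul_left, normBesselJ]

lemma abs_normBesselJ_le_one {γ : ℝ} (hγ : -(1 / 2) < γ) (x : ℝ) :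
    |normBesselJ γ x| ≤ 1 := by
  have hp : -1 < 2 * γ := by linarith
  have hM := cosSinMoment_zero_pos hp
  refine le_of_mul_le_mul_left ?_ hM
  calc cosSinMoment 0 (2 * γ) * |normBesselJ γ x|
      = ‖∫ θ in Ioo 0 π, Real.cos (x * Real.cos θ) * Real.sin θ ^ (2 * γ)‖ := by
        rw [integral_cos_mul_cos_mul_sin_rpow hγ, norm_mul, Real.norm_of_nonneg hM.le,
          Real.norm_eq_abs]
    _ ≤ cosSinMoment 0 (2 * γ) * 1 := by
        rw [mul_one]
        refine norm_integral_le_of_norm_le (integrableOn_cos_pow_mul_sin_rpow hp 0) ?_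
        filter_upwards [ae_restrict_mem measurableSet_Ioo] with θ hθ
        rw [pow_zero, one_mul]
        exact norm_mul_sin_rpow_le hθ (Real.abs_cos_le_one _) _

lemma norm_qpKernel_le_one (a b c d e : ℝ) {γ : ℝ} (hγ : -(1 / 2) < γ) (t s : ℝ) :
    ‖qpKernel a b c d e γ t s‖ ≤ 1 := by
  rw [qpKernel, norm_mul, Complex.norm_exp, neg_mul, neg_re, re_mul_ofReal, I_re, zero_mul,
    neg_zero, Real.exp_zero, one_mul, norm_real]
  exact abs_normBesselJ_le_one hγ _

lemma integral_muGamma (γ : ℝ) (F : ℝ → ℂ) :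
    ∫ s, F s ∂muGamma γ = ∫ s in Ioi 0, F s * ((s ^ (2 * γ + 1) : ℝ) : ℂ) := by
  have hμ : muGamma γ = (volume.restrict (Ioi 0)).withDensity
      fun s => ((s ^ (2 * γ + 1)).toNNReal : ℝ≥0∞) := rfl
  rw [hμ, integral_withDensity_eq_integral_smul (by fun_prop)]
  refine setIntegral_congr_fun measurableSet_Ioi fun s hs => ?_
  rw [NNReal.smul_def, Real.coe_toNNReal _ (Real.rpow_nonneg (le_of_lt hs) _), real_smul,
    mul_comm]

lemma norm_integral_mul_le_eLpNorm_one {α 𝕜 : Type*} [MeasurableSpace α] [RCLike 𝕜]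
    {μ : Measure α} {K h : α → 𝕜} (hK : ∀ x, ‖K x‖ ≤ 1) (hh : MemLp h 1 μ) :
    ‖∫ x, K x * h x ∂μ‖ ≤ (eLpNorm h 1 μ).toReal := by
  rw [eLpNorm_one_eq_lintegral_enorm, ← integral_norm_eq_lintegral_enorm hh.1]
  refine norm_integral_le_of_norm_le (memLp_one_iff_integrable.1 hh).norm (.of_forall fun x => ?_)
  rw [norm_mul]
  exact mul_le_of_le_one_left (norm_nonneg _) (hK x)

lemma cGamma_pos {γ : ℝ} (hγ : -1 < γ) : 0 < cGamma γ := by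
  have := Real.Gamma_pos_of_pos (by linarith : 0 < γ + 1)
  rw [cGamma]
  positivity

lemma norm_cGamma_div_cpow {γ : ℝ} (hγ : -1 < γ) (b : ℝ) :
    ‖(cGamma γ : ℂ) / (I * b) ^ ((γ : ℂ) + 1)‖ = cGamma γ / |b| ^ (γ + 1) := by
  rw [norm_div, norm_real, Real.norm_of_nonneg (cGamma_pos hγ).le, ← Complex.ofReal_one,
    ← Complex.ofReal_add, norm_cpow_real, norm_mul, norm_I, one_mul, norm_real, Real.norm_eq_abs]

theorem qpFB_abs_le_general (a b c d e γ : ℝ) (hγ : γ > -(1 / 2))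
    (h : ℝ → ℂ) (hh : MemLp h 1 (muGamma γ)) :
    ∀ t ∈ Ici (0 : ℝ),
      ‖qpFB a b c d e γ h t‖ ≤
        cGamma γ / |b| ^ (γ + 1) * (eLpNorm h 1 (muGamma γ)).toReal := by
  intro t _
  have hc := cGamma_pos (γ := γ) (by linarith)
  rw [qpFB, norm_mul, norm_cGamma_div_cpow (by linarith), ← integral_muGamma]
  exact mul_le_mul_of_nonneg_left
    (norm_integral_mul_le_eLpNorm_one (norm_qpKernel_le_one a b c d e hγ t) hh) (by positivity)

/-- pointwise bound for the quadratic-phase Fourier–Bessel transform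
of an `L¹_γ` function. -/
theorem qpFB_abs_le (a b c d e γ : ℝ) (hb : b ≠ 0) (hγ : γ > -(1 / 2))
    (h : ℝ → ℂ) (hh : MemLp h 1 (muGamma γ)) :
    ∀ t ∈ Ici (0 : ℝ),
      ‖qpFB a b c d e γ h t‖ ≤
        cGamma γ / |b| ^ (γ + 1) * (eLpNorm h 1 (muGamma γ)).toReal :=
  qpFB_abs_le_general a b c d e γ hγ h hh
end

section
/- (Scaling) Let a, b, c, d, e be real numbers with b ≠ 0, let γ > -1/2, let k > 0, and let h ∈ L¹_γ(ℝ₊). Then for every t ∈ [0,∞), B^{a,b,c}_{d,e,γ}[h](k t) = k^{-(2γ+2)} · B^{a',b,c'}_{d',e',γ}[h_k](t), where a' = a/k², c' = c k², d' = d/k, e' = e k, and h_k(u) = h(u/k). -/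
open MeasureTheory Set Complex ENNReal

theorem integral_Ioi_mul_rpow_comp_mul_left (F : ℝ → ℂ) (p : ℝ) {k : ℝ} (hk : 0 < k) :
    ∫ s in Ioi 0, F s * ((s ^ p : ℝ) : ℂ) =
      ((k ^ (p + 1) : ℝ) : ℂ) * ∫ s in Ioi 0, F (k * s) * ((s ^ p : ℝ) : ℂ) := by
  have hcomp := integral_comp_mul_left_Ioi' (fun s => F s * ((s ^ p : ℝ) : ℂ)) 0 hk
  rw [mul_zero] at hcomp
  have hweight : ∀ s ∈ Ioi (0 : ℝ), F (k * s) * (((k * s) ^ p : ℝ) : ℂ) =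
      ((k ^ p : ℝ) : ℂ) * (F (k * s) * ((s ^ p : ℝ) : ℂ)) := fun s hs => by
    rw [Real.mul_rpow hk.le (le_of_lt hs)]
    push_cast
    ring
  rw [← hcomp, setIntegral_congr_fun measurableSet_Ioi hweight, integral_const_mul,
    Real.rpow_add_one hk.ne', Complex.real_smul]
  push_cast
  ring

theorem qpKernel_dilate (a b c d e γ t s : ℝ) {k : ℝ} (hk : k ≠ 0) :
    qpKernel (a / k ^ 2) b (c * k ^ 2) (d / k) (e * k) γ t (k * s) =
      qpKernel a b c d e γ (k * t) s := by
  have hphase : a / k ^ 2 * (k * s) ^ 2 + c * k ^ 2 * t ^ 2 + d / k * (k * s) + e * k * t =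
      a * s ^ 2 + c * (k * t) ^ 2 + d * s + e * (k * t) := by
    field_simp
  rw [qpKernel, qpKernel, hphase, mul_right_comm k s t, mul_comm (k * t) s]

theorem qpFB_dilate (a b c d e γ : ℝ) {k : ℝ} (hk : 0 < k) (h : ℝ → ℂ) (t : ℝ) :
    qpFB (a / k ^ 2) b (c * k ^ 2) (d / k) (e * k) γ (fun u => h (u / k)) t =
      ((k ^ (2 * γ + 2) : ℝ) : ℂ) * qpFB a b c d e γ h (k * t) := by
  simp only [qpFB]
  rw [integral_Ioi_mul_rpow_comp_mul_left _ _ hk]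
  simp only [qpKernel_dilate a b c d e γ t _ hk.ne', mul_div_cancel_left₀ _ hk.ne']
  rw [show 2 * γ + 1 + 1 = 2 * γ + 2 by ring]
  ring

theorem qpFB_scaling_general (a b c d e γ k : ℝ) (hk : 0 < k)
    (h : ℝ → ℂ) :
    ∀ t ∈ Ici (0 : ℝ),
      qpFB a b c d e γ h (k * t) =
        ((k ^ (-(2 * γ + 2)) : ℝ) : ℂ) *
          qpFB (a / k ^ 2) b (c * k ^ 2) (d / k) (e * k) γ (fun u => h (u / k)) t := by
  intro t _
  have hpow : ((k ^ (-(2 * γ + 2)) : ℝ) : ℂ) * ((k ^ (2 * γ + 2) : ℝ) : ℂ) = 1 := by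
    rw [← Complex.ofReal_mul, ← Real.rpow_add hk, neg_add_cancel, Real.rpow_zero,
      Complex.ofReal_one]
  rw [qpFB_dilate a b c d e γ hk, ← mul_assoc, hpow, one_mul]

/-- Scaling: behaviour of the quadratic-phase Fourier–Bessel transform under
dilations. -/
theorem qpFB_scaling (a b c d e γ k : ℝ) (hb : b ≠ 0) (hγ : γ > -(1 / 2)) (hk : 0 < k)
    (h : ℝ → ℂ) (hh : MemLp h 1 (muGamma γ)) :
    ∀ t ∈ Ici (0 : ℝ),
      qpFB a b c d e γ h (k * t) =
        ((k ^ (-(2 * γ + 2)) : ℝ) : ℂ) *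
          qpFB (a / k ^ 2) b (c * k ^ 2) (d / k) (e * k) γ (fun u => h (u / k)) t :=
  qpFB_scaling_general a b c d e γ k hk h
end

section
/- For γ > -1/2 and all s, t > 0, the kernel W_γ of the Fourier–Bessel translation satisfies ∫₀^∞ W_γ(s,t,u) u^{2γ+1} du = 1. -/
open MeasureTheory Set Complex ENNReal

/-!
On the support `|s - t| < u < s + t` of `W_γ(s, t, ·)`, Heron's formula reads
`16 Δ² = (u² - (s - t)²) ((s + t)² - u²)`. The substitutions `v = u²` and then
`v = (s - t)² + 4 s t w` turn the integral into `2 c_γ B(γ + 1/2, γ + 1/2)`, where `c_γ` is the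
normalising constant of `W_γ`; all powers of `4 s t` cancel. Legendre's duplication formula
`Γ(γ + 1/2) Γ(γ + 1) = 2^{-2γ} √π Γ(2γ + 1)` shows that `c_γ = 1 / (2 B(γ + 1/2, γ + 1/2))`.
-/

lemma integral_Ioo_rpow_mul_one_sub_rpow {p q : ℝ} (hp : 0 < p) (hq : 0 < q) :
    ∫ x in Ioo (0 : ℝ) 1, x ^ (p - 1) * (1 - x) ^ (q - 1) =
      Real.Gamma p * Real.Gamma q / Real.Gamma (p + q) := by
  have hB : Complex.betaIntegral p q =
      ((∫ x in Ioo (0 : ℝ) 1, x ^ (p - 1) * (1 - x) ^ (q - 1) : ℝ) : ℂ) := by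
    rw [Complex.betaIntegral, intervalIntegral.integral_of_le zero_le_one,
      ← integral_Ioc_eq_integral_Ioo, ← integral_complex_ofReal]
    refine setIntegral_congr_fun measurableSet_Ioc fun x hx => ?_
    push_cast [Complex.ofReal_cpow hx.1.le, Complex.ofReal_cpow (sub_nonneg.2 hx.2)]
    rfl
  have key := Complex.Gamma_mul_Gamma_eq_betaIntegral (s := p) (t := q) (by simpa) (by simpa)
  rw [hB, ← Complex.ofReal_add, Complex.Gamma_ofReal, Complex.Gamma_ofReal,
    Complex.Gamma_ofReal] at key
  rw [eq_div_iff (Real.Gamma_pos_of_pos (by linarith)).ne', mul_comm]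
  exact_mod_cast key.symm

lemma integral_Ioo_sub_rpow_mul_sub_rpow {α β p q : ℝ} (hαβ : α < β) (hp : 0 < p) (hq : 0 < q) :
    ∫ v in Ioo α β, (v - α) ^ (p - 1) * (β - v) ^ (q - 1) =
      (β - α) ^ (p + q - 1) * (Real.Gamma p * Real.Gamma q / Real.Gamma (p + q)) := by
  set D := β - α
  have hD : 0 < D := sub_pos.2 hαβ
  have himg : (D * · + α) '' Ioo 0 1 = Ioo α β := by
    rw [image_affine_Ioo hD]; simp [D]
  rw [← himg, integral_image_eq_integral_abs_deriv_smul measurableSet_Ioo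
      (fun x _ => (((hasDerivAt_id' x).const_mul D).add_const α).hasDerivWithinAt)
      fun x _ y _ hxy => mul_left_cancel₀ hD.ne' (add_right_cancel hxy),
    ← integral_Ioo_rpow_mul_one_sub_rpow hp hq, ← integral_const_mul]
  refine setIntegral_congr_fun measurableSet_Ioo fun w ⟨hw0, hw1⟩ => ?_
  rw [show D * w + α - α = D * w by ring, show β - (D * w + α) = D * (1 - w) by ring,
    Real.mul_rpow hD.le hw0.le, Real.mul_rpow hD.le (by linarith), smul_eq_mul, mul_one,
    abs_of_pos hD, show p + q - 1 = 1 + (p - 1) + (q - 1) by ring, Real.rpow_add hD,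
    Real.rpow_add hD, Real.rpow_one]
  ring

lemma image_sq_Ioo {a b : ℝ} (ha : 0 ≤ a) (hb : 0 ≤ b) :
    (· ^ 2) '' Ioo a b = Ioo (a ^ 2) (b ^ 2) := by
  ext v
  constructor
  · rintro ⟨u, ⟨hau, hub⟩, rfl⟩
    exact ⟨pow_lt_pow_left₀ hau ha two_ne_zero, pow_lt_pow_left₀ hub (ha.trans hau.le) two_ne_zero⟩
  · rintro ⟨hav, hvb⟩
    have hv : 0 ≤ v := (sq_nonneg a).trans hav.le
    refine ⟨√v, ⟨?_, ?_⟩, Real.sq_sqrt hv⟩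
    · simpa [Real.sqrt_sq ha] using Real.sqrt_lt_sqrt (sq_nonneg a) hav
    · simpa [Real.sqrt_sq hb] using Real.sqrt_lt_sqrt hv hvb

lemma integral_Ioo_smul_comp_sq {E : Type*} [NormedAddCommGroup E] [NormedSpace ℝ E]
    {a b : ℝ} (ha : 0 ≤ a) (hb : 0 ≤ b) (f : ℝ → E) :
    ∫ u in Ioo a b, u • f (u ^ 2) = (2 : ℝ)⁻¹ • ∫ v in Ioo (a ^ 2) (b ^ 2), f v := by
  rw [← image_sq_Ioo ha hb, integral_image_eq_integral_abs_deriv_smul measurableSet_Ioo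
      (f' := (2 * ·)) (fun x _ => by simpa using (hasDerivAt_pow 2 x).hasDerivWithinAt)
      ((pow_left_strictMonoOn₀ two_ne_zero).injOn.mono fun x hx => ha.trans hx.1.le),
    ← integral_smul]
  refine setIntegral_congr_fun measurableSet_Ioo fun u hu => ?_
  rw [smul_smul, abs_of_pos (by linarith [ha.trans_lt hu.1]), inv_mul_cancel_left₀ two_ne_zero]

lemma integral_Ioi_eq_integral_Ioo_of_eq_zero_off_Icc {E : Type*} [NormedAddCommGroup E]
    [NormedSpace ℝ E] {f : ℝ → E} {a b c : ℝ} (hca : c ≤ a) (hf : ∀ x ∉ Icc a b, f x = 0) :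
    ∫ x in Ioi c, f x = ∫ x in Ioo a b, f x := by
  rw [← integral_Ici_eq_integral_Ioi, ← integral_Icc_eq_integral_Ioo]
  exact setIntegral_eq_of_subset_of_forall_sdiff_eq_zero measurableSet_Ici
    (fun x hx => hca.trans hx.1) fun x hx => hf x hx.2

noncomputable def WkerConst (γ : ℝ) : ℝ :=
  (2 : ℝ) ^ (2 * γ - 1) * Real.Gamma (γ + 1) / (Real.sqrt Real.pi * Real.Gamma (γ + 1 / 2))

lemma WkerConst_eq_Gamma_div {γ : ℝ} (hγ : 0 < γ + 1 / 2) :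
    WkerConst γ =
      Real.Gamma (2 * γ + 1) / (2 * (Real.Gamma (γ + 1 / 2) * Real.Gamma (γ + 1 / 2))) := by
  have hdup := Real.Gamma_mul_Gamma_add_half (γ + 1 / 2)
  rw [show γ + 1 / 2 + 1 / 2 = γ + 1 by ring, show 2 * (γ + 1 / 2) = 2 * γ + 1 by ring,
    show 1 - (2 * γ + 1) = -(2 * γ) by ring] at hdup
  have hpow : (2 : ℝ) ^ (2 * γ - 1) * 2 ^ (-(2 * γ)) = 2⁻¹ := by
    rw [← Real.rpow_add two_pos, show 2 * γ - 1 + -(2 * γ) = -1 by ring, Real.rpow_neg_one]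
  have hΓ := (Real.Gamma_pos_of_pos hγ).ne'
  have hπ := (Real.sqrt_pos.2 Real.pi_pos).ne'
  rw [WkerConst, div_eq_div_iff (by positivity) (by positivity)]
  linear_combination (2 * 2 ^ (2 * γ - 1) * Real.Gamma (γ + 1 / 2)) * hdup
    + (2 * Real.Gamma (2 * γ + 1) * Real.sqrt Real.pi * Real.Gamma (γ + 1 / 2)) * hpow

lemma Wker_eq_zero_of_notMem_Icc {γ s t u : ℝ} (hu : u ∉ Icc |s - t| (s + t)) :
    Wker γ s t u = 0 :=
  if_neg hu

lemma Wker_mul_rpow_of_mem_Ioo {γ s t u : ℝ} (hs : 0 < s) (ht : 0 < t)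
    (hu : u ∈ Ioo |s - t| (s + t)) :
    Wker γ s t u * u ^ (2 * γ + 1) =
      4 * WkerConst γ / (4 * (s * t)) ^ (2 * γ) *
        (u * ((u ^ 2 - |s - t| ^ 2) ^ (γ - 1 / 2) * ((s + t) ^ 2 - u ^ 2) ^ (γ - 1 / 2))) := by
  obtain ⟨hau, hub⟩ := hu
  have hu0 : 0 < u := (abs_nonneg _).trans_lt hau
  have hX : 0 < u ^ 2 - |s - t| ^ 2 := by nlinarith [abs_nonneg (s - t)]
  have hY : 0 < (s + t) ^ 2 - u ^ 2 := by nlinarith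
  have hprod : (s + t + u) * (s + t - u) * (s - t + u) * (t + u - s) =
      (u ^ 2 - |s - t| ^ 2) * ((s + t) ^ 2 - u ^ 2) := by
    rw [sq_abs]; ring
  have harea : triArea s t u ^ (2 * γ - 1) = 4 / 4 ^ (2 * γ) *
      ((u ^ 2 - |s - t| ^ 2) ^ (γ - 1 / 2) * ((s + t) ^ 2 - u ^ 2) ^ (γ - 1 / 2)) := by
    rw [triArea, hprod, Real.mul_rpow (by norm_num) (Real.sqrt_nonneg _), Real.sqrt_eq_rpow,
      ← Real.rpow_mul (mul_pos hX hY).le, Real.mul_rpow hX.le hY.le, one_div,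
      Real.inv_rpow (by norm_num), Real.rpow_sub (by norm_num), Real.rpow_one]
    field_simp
  rw [Wker, if_pos ⟨hau.le, hub.le⟩, harea, ← WkerConst,
    Real.mul_rpow (mul_pos hs ht).le hu0.le,
    Real.mul_rpow (by norm_num : (0 : ℝ) ≤ 4) (mul_pos hs ht).le, Real.rpow_add_one hu0.ne']
  field_simp

/-- the Fourier–Bessel translation kernel `W_γ` has total weighted
integral equal to 1. -/
theorem Wker_integral_eq_one (γ : ℝ) (hγ : γ > -(1 / 2)) :
    ∀ s ∈ Ioi (0 : ℝ), ∀ t ∈ Ioi (0 : ℝ),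
      ∫ u in Ioi (0 : ℝ), Wker γ s t u * u ^ (2 * γ + 1) = 1 := by
  intro s (hs : 0 < s) t (ht : 0 < t)
  have hp : 0 < γ + 1 / 2 := by linarith
  have hab : |s - t| < s + t := abs_sub_lt_iff.2 ⟨by linarith, by linarith⟩
  have hwidth : (s + t) ^ 2 - |s - t| ^ 2 = 4 * (s * t) := by rw [sq_abs]; ring
  have hbeta := integral_Ioo_sub_rpow_mul_sub_rpow
    (sq_lt_sq' (by linarith [abs_nonneg (s - t)]) hab) hp hp
  rw [hwidth, show γ + 1 / 2 - 1 = γ - 1 / 2 by ring,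
    show γ + 1 / 2 + (γ + 1 / 2) - 1 = 2 * γ by ring,
    show γ + 1 / 2 + (γ + 1 / 2) = 2 * γ + 1 by ring] at hbeta
  calc ∫ u in Ioi (0 : ℝ), Wker γ s t u * u ^ (2 * γ + 1)
      = ∫ u in Ioo |s - t| (s + t), Wker γ s t u * u ^ (2 * γ + 1) :=
        integral_Ioi_eq_integral_Ioo_of_eq_zero_off_Icc (abs_nonneg _) fun u hu => by
          rw [Wker_eq_zero_of_notMem_Icc hu, zero_mul]
    _ = 4 * WkerConst γ / (4 * (s * t)) ^ (2 * γ) * ∫ u in Ioo |s - t| (s + t),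
          u • ((u ^ 2 - |s - t| ^ 2) ^ (γ - 1 / 2) * ((s + t) ^ 2 - u ^ 2) ^ (γ - 1 / 2)) := by
        rw [← integral_const_mul]
        exact setIntegral_congr_fun measurableSet_Ioo fun u hu =>
          Wker_mul_rpow_of_mem_Ioo hs ht hu
    _ = 2 * WkerConst γ * (Real.Gamma (γ + 1 / 2) * Real.Gamma (γ + 1 / 2) /
          Real.Gamma (2 * γ + 1)) := by
        rw [integral_Ioo_smul_comp_sq (abs_nonneg _) (by positivity)
          (fun v => (v - |s - t| ^ 2) ^ (γ - 1 / 2) * ((s + t) ^ 2 - v) ^ (γ - 1 / 2)), hbeta,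
          smul_eq_mul]
        field_simp
        ring
    _ = 1 := by
        rw [WkerConst_eq_Gamma_div hp]
        have hΓ := (Real.Gamma_pos_of_pos hp).ne'
        have hΓ' := (Real.Gamma_pos_of_pos (by linarith : 0 < 2 * γ + 1)).ne'
        set Γhalf := Real.Gamma (γ + 1 / 2)
        field_simp
end

section
/- Let a, b, d be real numbers with b ≠ 0, let γ > -1/2, let 1 ≤ p ≤ ∞, and let h ∈ L^p_γ(ℝ₊). Then for every t ∈ (0,∞), the function s ↦ T^{a,b,d}_{t,γ}[h](s) belongs to L^p_γ(ℝ₊) and ‖T^{a,b,d}_{t,γ}[h]‖_{γ,p} ≤ ‖h‖_{γ,p}. -/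
open MeasureTheory Set Complex ENNReal

/-!
For `s, t > 0` the substitution `v = (u² - (s - t)²) / (4st)` carries `W_γ(s,t,u) u^{2γ+1} du`
to the Beta(γ + 1/2, γ + 1/2) distribution, Legendre's duplication formula matching the
constants. So `W_γ(s,t,·)` is a probability density for `s^{2γ+1} ds`, and by the symmetry
`W_γ(s,t,u) = W_γ(u,t,s)` so is `W_γ(·,t,u)`. The quadratic phases have modulus one, whence
`|T h(s)| ≤ ∫ W_γ(s,t,u) |h(u)| u^{2γ+1} du`; and an integral operator whose kernel has all row and
column integrals at most one contracts every `L^p` norm (Jensen along the rows, Tonelli for the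
columns).
-/

open ProbabilityTheory

section MarkovKernel

variable {α : Type*} [MeasurableSpace α] {μ : Measure α}

theorem rpow_lintegral_mul_le_lintegral_mul_rpow {k φ : α → ℝ≥0∞} (hk : AEMeasurable k μ)
    (hφ : AEMeasurable φ μ) (hk1 : ∫⁻ x, k x ∂μ ≤ 1) {r : ℝ} (hr : 1 ≤ r) :
    (∫⁻ x, k x * φ x ∂μ) ^ r ≤ ∫⁻ x, k x * φ x ^ r ∂μ := by
  obtain rfl | hr1 := hr.eq_or_lt
  · simp
  set q := r.conjExponent
  have hrq : r.HolderConjugate q := .conjExponent hr1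
  have hr0 : 0 < r := hrq.pos
  have hq0 : 0 < q := hrq.symm.pos
  have split : ∀ x, k x * φ x = k x ^ (1 / q) * (k x ^ (1 / r) * φ x) := fun x => by
    rw [← mul_assoc, ← ENNReal.rpow_add_of_nonneg _ _ (by positivity) (by positivity),
      one_div, one_div, add_comm, hrq.inv_add_inv_eq_one, ENNReal.rpow_one]
  have holder := ENNReal.lintegral_mul_le_Lp_mul_Lq μ hrq.symm
    (hk.pow_const (1 / q)) ((hk.pow_const (1 / r)).mul hφ)
  simp only [Pi.mul_apply, ← ENNReal.rpow_mul, one_div_mul_cancel hq0.ne', ENNReal.rpow_one,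
    ENNReal.mul_rpow_of_nonneg _ _ hr0.le, one_div_mul_cancel hr0.ne'] at holder
  calc (∫⁻ x, k x * φ x ∂μ) ^ r
      ≤ ((∫⁻ x, k x ∂μ) ^ (1 / q) * (∫⁻ x, k x * φ x ^ r ∂μ) ^ (1 / r)) ^ r := by
        simp only [split]
        exact ENNReal.rpow_le_rpow holder hr0.le
    _ ≤ ((∫⁻ x, k x * φ x ^ r ∂μ) ^ (1 / r)) ^ r := by
        gcongr
        exact mul_le_of_le_one_left' (ENNReal.rpow_le_one hk1 (by positivity))
    _ = ∫⁻ x, k x * φ x ^ r ∂μ := by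
        rw [← ENNReal.rpow_mul, one_div_mul_cancel hr0.ne', ENNReal.rpow_one]

theorem lintegral_rpow_lintegral_kernel_le [SFinite μ] {k : α → α → ℝ≥0∞}
    (hk : Measurable (Function.uncurry k)) (hrow : ∀ᵐ x ∂μ, ∫⁻ y, k x y ∂μ ≤ 1)
    (hcol : ∀ᵐ y ∂μ, ∫⁻ x, k x y ∂μ ≤ 1) {φ : α → ℝ≥0∞} (hφ : AEMeasurable φ μ) {r : ℝ}
    (hr : 1 ≤ r) :
    ∫⁻ x, (∫⁻ y, k x y * φ y ∂μ) ^ r ∂μ ≤ ∫⁻ y, φ y ^ r ∂μ := by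
  have hkx : ∀ x, Measurable (k x) := fun x => hk.comp measurable_prodMk_left
  have hky : ∀ y, Measurable (k · y) := fun y => hk.comp measurable_prodMk_right
  calc ∫⁻ x, (∫⁻ y, k x y * φ y ∂μ) ^ r ∂μ
      ≤ ∫⁻ x, ∫⁻ y, k x y * φ y ^ r ∂μ ∂μ := by
        refine lintegral_mono_ae ?_
        filter_upwards [hrow] with x hx
        exact rpow_lintegral_mul_le_lintegral_mul_rpow (hkx x).aemeasurable hφ hx hr
    _ = ∫⁻ y, (∫⁻ x, k x y ∂μ) * φ y ^ r ∂μ := by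
        rw [lintegral_lintegral_swap (hk.aemeasurable.mul (hφ.pow_const r).comp_snd)]
        simp only [lintegral_mul_const _ (hky _)]
    _ ≤ ∫⁻ y, φ y ^ r ∂μ := by
        refine lintegral_mono_ae ?_
        filter_upwards [hcol] with y hy
        exact mul_le_of_le_one_left' hy

theorem eLpNorm_le_of_enorm_le_lintegral_kernel [SFinite μ] {E F : Type*}
    [NormedAddCommGroup E] [NormedAddCommGroup F] {k : α → α → ℝ≥0∞}
    (hk : Measurable (Function.uncurry k)) (hrow : ∀ᵐ x ∂μ, ∫⁻ y, k x y ∂μ ≤ 1)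
    (hcol : ∀ᵐ y ∂μ, ∫⁻ x, k x y ∂μ ≤ 1) {f : α → E} {g : α → F}
    (hg : AEStronglyMeasurable g μ) (hfg : ∀ᵐ x ∂μ, ‖f x‖ₑ ≤ ∫⁻ y, k x y * ‖g y‖ₑ ∂μ)
    {p : ℝ≥0∞} (hp : 1 ≤ p) :
    eLpNorm f p μ ≤ eLpNorm g p μ := by
  obtain rfl | hp_top := eq_or_ne p ∞
  · rw [eLpNorm_exponent_top, eLpNorm_exponent_top]
    refine essSup_le_of_ae_le _ ?_
    filter_upwards [hfg, hrow] with x hfx hx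
    calc ‖f x‖ₑ ≤ ∫⁻ y, k x y * ‖g y‖ₑ ∂μ := hfx
      _ ≤ ∫⁻ y, k x y * eLpNormEssSup g μ ∂μ :=
        lintegral_mono_ae (ae_le_eLpNormEssSup.mono fun y hy => by gcongr)
      _ = (∫⁻ y, k x y ∂μ) * eLpNormEssSup g μ :=
        lintegral_mul_const _ (hk.comp measurable_prodMk_left)
      _ ≤ eLpNormEssSup g μ := mul_le_of_le_one_left' hx
  have hp0 : p ≠ 0 := (zero_lt_one.trans_le hp).ne'
  have hr : 1 ≤ p.toReal := by
    simpa using ENNReal.toReal_mono hp_top hp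
  rw [eLpNorm_eq_lintegral_rpow_enorm_toReal hp0 hp_top,
    eLpNorm_eq_lintegral_rpow_enorm_toReal hp0 hp_top]
  gcongr ?_ ^ _
  calc ∫⁻ x, ‖f x‖ₑ ^ p.toReal ∂μ
      ≤ ∫⁻ x, (∫⁻ y, k x y * ‖g y‖ₑ ∂μ) ^ p.toReal ∂μ :=
        lintegral_mono_ae (hfg.mono fun x hx => by gcongr)
    _ ≤ ∫⁻ y, ‖g y‖ₑ ^ p.toReal ∂μ :=
        lintegral_rpow_lintegral_kernel_le hk hrow hcol hg.enorm hr

end MarkovKernel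

theorem one_div_beta_self_half_add (γ : ℝ) (hγ : γ > -(1 / 2)) :
    1 / beta (γ + 1 / 2) (γ + 1 / 2) =
      2 * ((2 : ℝ) ^ (2 * γ - 1) * Real.Gamma (γ + 1) /
        (Real.sqrt Real.pi * Real.Gamma (γ + 1 / 2))) := by
  have hdup := Real.Gamma_mul_Gamma_add_half (γ + 1 / 2)
  rw [show γ + 1 / 2 + 1 / 2 = γ + 1 by ring, show 2 * (γ + 1 / 2) = 2 * γ + 1 by ring,
    show 1 - (2 * γ + 1) = -(2 * γ) by ring] at hdup
  have hpow : (2 : ℝ) ^ (2 * γ - 1) * 2 ^ (-(2 * γ)) = 1 / 2 := by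
    rw [← Real.rpow_add two_pos, show 2 * γ - 1 + -(2 * γ) = -1 by ring, Real.rpow_neg_one,
      one_div]
  have hG : 0 < Real.Gamma (γ + 1 / 2) := Real.Gamma_pos_of_pos (by linarith)
  have hG2 : 0 < Real.Gamma (2 * γ + 1) := Real.Gamma_pos_of_pos (by linarith)
  have hπ : 0 < Real.sqrt Real.pi := Real.sqrt_pos.2 Real.pi_pos
  rw [beta, show γ + 1 / 2 + (γ + 1 / 2) = 2 * γ + 1 by ring]
  generalize Real.Gamma (γ + 1 / 2) = G at *
  generalize Real.Gamma (2 * γ + 1) = G2 at *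
  generalize Real.sqrt Real.pi = S at *
  field_simp
  linear_combination (-2 * (2 : ℝ) ^ (2 * γ - 1)) * hdup - (2 * G2 * S) * hpow

theorem Wker_comm (γ s t u : ℝ) : Wker γ s t u = Wker γ u t s := by
  have hsupp : (|s - t| ≤ u ∧ u ≤ s + t) ↔ (|u - t| ≤ s ∧ s ≤ u + t) := by
    simp only [abs_le]
    constructor <;> rintro ⟨⟨h₁, h₂⟩, h₃⟩ <;> exact ⟨⟨by linarith, by linarith⟩, by linarith⟩
  have harea : triArea s t u = triArea u t s := by
    unfold triArea
    ring_nf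
  simp only [Wker, hsupp, harea, show s * t * u = u * t * s by ring]

theorem measurable_Wker (γ t : ℝ) : Measurable fun p : ℝ × ℝ => Wker γ p.1 t p.2 := by
  refine Measurable.ite ?_ (by unfold triArea; fun_prop) measurable_const
  exact (measurableSet_le (by fun_prop) measurable_snd).inter
    (measurableSet_le measurable_snd (by fun_prop))

section Kernel

variable {γ s t u : ℝ}

theorem Wker_nonneg (hγ : γ > -(1 / 2)) (hs : 0 < s) (ht : 0 < t) (hu : 0 < u) :
    0 ≤ Wker γ s t u := by
  have hG : 0 < Real.Gamma (γ + 1 / 2) := Real.Gamma_pos_of_pos (by linarith)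
  have hG' : 0 < Real.Gamma (γ + 1) := Real.Gamma_pos_of_pos (by linarith)
  have harea : 0 ≤ triArea s t u := by
    unfold triArea
    positivity
  unfold Wker
  split_ifs
  · positivity
  · rfl

theorem triArea_eq (hs : 0 < s) (ht : 0 < t) (u : ℝ) :
    triArea s t u = s * t * Real.sqrt ((u ^ 2 - (s - t) ^ 2) / (4 * s * t) *
      (1 - (u ^ 2 - (s - t) ^ 2) / (4 * s * t))) := by
  have hst : 4 * s * t ≠ 0 := by positivity
  have hprod : (s + t + u) * (s + t - u) * (s - t + u) * (t + u - s) = (4 * s * t) ^ 2 *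
      ((u ^ 2 - (s - t) ^ 2) / (4 * s * t) * (1 - (u ^ 2 - (s - t) ^ 2) / (4 * s * t))) := by
    field_simp
    ring
  rw [triArea, hprod, Real.sqrt_mul (sq_nonneg _), Real.sqrt_sq (by positivity)]
  ring

theorem rpow_mul_Wker_eq (hγ : γ > -(1 / 2)) (hs : 0 < s) (ht : 0 < t) (hu : 0 < u)
    (hu₁ : u ≠ |s - t|) (hu₂ : u ≠ s + t) :
    u ^ (2 * γ + 1) * Wker γ s t u = 2 * u / (4 * s * t) *
      betaPDFReal (γ + 1 / 2) (γ + 1 / 2) ((u ^ 2 - (s - t) ^ 2) / (4 * s * t)) := by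
  have hst : 0 < 4 * s * t := by positivity
  set v := (u ^ 2 - (s - t) ^ 2) / (4 * s * t) with hv
  have hv₀ : 0 < v ↔ |s - t| < u := by
    rw [hv, div_pos_iff_of_pos_right hst, sub_pos, ← sq_abs, sq_lt_sq₀ (abs_nonneg _) hu.le]
  have hv₁ : v < 1 ↔ u < s + t := by
    rw [hv, div_lt_one hst, sub_lt_iff_lt_add,
      show 4 * s * t + (s - t) ^ 2 = (s + t) ^ 2 by ring, sq_lt_sq₀ hu.le (by positivity)]
  have hsupp : (|s - t| ≤ u ∧ u ≤ s + t) ↔ (0 < v ∧ v < 1) := by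
    rw [hv₀, hv₁, le_iff_lt_or_eq, le_iff_lt_or_eq, or_iff_left hu₁.symm, or_iff_left hu₂]
  unfold Wker betaPDFReal
  split_ifs with hW hB hB
  · obtain ⟨hv_pos, hv_lt⟩ := hB
    have hX : 0 < v * (1 - v) := mul_pos hv_pos (sub_pos.2 hv_lt)
    have hst' : 0 < s * t := by positivity
    have hsqrt : Real.sqrt (v * (1 - v)) ^ (2 * γ - 1) = (v * (1 - v)) ^ (γ - 1 / 2) := by
      rw [Real.sqrt_eq_rpow, ← Real.rpow_mul hX.le]
      ring_nf
    rw [triArea_eq hs ht, ← hv, one_div_beta_self_half_add γ hγ, mul_assoc _ (v ^ _),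
      ← Real.mul_rpow hv_pos.le (sub_pos.2 hv_lt).le, show γ + 1 / 2 - 1 = γ - 1 / 2 by ring,
      Real.mul_rpow hst'.le (Real.sqrt_nonneg _), hsqrt, Real.rpow_sub hst', Real.rpow_one,
      Real.mul_rpow hst'.le hu.le, Real.rpow_add hu, Real.rpow_one]
    have : (s * t) ^ (2 * γ) ≠ 0 := (Real.rpow_pos_of_pos hst' _).ne'
    have : u ^ (2 * γ) ≠ 0 := (Real.rpow_pos_of_pos hu _).ne'
    field_simp
    ring
  · exact absurd (hsupp.1 hW) hB
  · exact absurd (hsupp.2 hB) hW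
  · simp

end Kernel

theorem lintegral_muGamma (γ : ℝ) (f : ℝ → ℝ≥0∞) :
    ∫⁻ u, f u ∂muGamma γ = ∫⁻ u in Ioi 0, ENNReal.ofReal (u ^ (2 * γ + 1)) * f u :=
  lintegral_withDensity_eq_lintegral_mul_non_measurable _ (by fun_prop)
    (.of_forall fun _ => ofReal_lt_top) f

instance (γ : ℝ) : SFinite (muGamma γ) := by
  unfold muGamma
  infer_instance

theorem muGamma_absolutelyContinuous (γ : ℝ) : muGamma γ ≪ volume.restrict (Ioi 0) :=
  withDensity_absolutelyContinuous _ _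

theorem absolutelyContinuous_muGamma (γ : ℝ) : volume.restrict (Ioi 0) ≪ muGamma γ :=
  withDensity_absolutelyContinuous' (by fun_prop) <| (ae_restrict_iff' measurableSet_Ioi).2 <|
    .of_forall fun u hu => by simpa using Real.rpow_pos_of_pos hu (2 * γ + 1)

theorem ae_pos_muGamma (γ : ℝ) : ∀ᵐ s ∂muGamma γ, 0 < s :=
  (muGamma_absolutelyContinuous γ).ae_le (ae_restrict_mem measurableSet_Ioi)

theorem lintegral_Wker_muGamma {γ s t : ℝ} (hγ : γ > -(1 / 2)) (hs : 0 < s) (ht : 0 < t) :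
    ∫⁻ u, ENNReal.ofReal (Wker γ s t u) ∂muGamma γ = 1 := by
  have hst : 0 < 4 * s * t := by positivity
  set v : ℝ → ℝ := fun u => (u ^ 2 - (s - t) ^ 2) / (4 * s * t) with hv
  have hv' : ∀ u ∈ Ioi (0 : ℝ), HasDerivWithinAt v (2 * u / (4 * s * t)) (Ioi 0) u :=
    fun u _ => by
      simpa using (((hasDerivAt_pow 2 u).sub_const ((s - t) ^ 2)).div_const
        (4 * s * t)).hasDerivWithinAt
  have hinj : InjOn v (Ioi 0) := fun u hu w hw h => by
    have : u ^ 2 = w ^ 2 := by simpa [hv, hst.ne'] using h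
    exact (sq_eq_sq₀ (le_of_lt hu) (le_of_lt hw)).1 this
  have himage : v '' Ioi 0 = Ioi (-(s - t) ^ 2 / (4 * s * t)) := by
    ext w
    constructor
    · rintro ⟨u, hu, rfl⟩
      rw [mem_Ioi, div_lt_div_iff_of_pos_right hst]
      nlinarith [pow_pos (show 0 < u from hu) 2]
    · intro hw
      have hpos : 0 < (s - t) ^ 2 + 4 * s * t * w := by
        rw [mem_Ioi, div_lt_iff₀ hst] at hw
        linarith
      refine ⟨Real.sqrt ((s - t) ^ 2 + 4 * s * t * w), Real.sqrt_pos.2 hpos, ?_⟩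
      simp only [hv, Real.sq_sqrt hpos.le]
      field_simp
      ring
  calc ∫⁻ u, ENNReal.ofReal (Wker γ s t u) ∂muGamma γ
      = ∫⁻ u in Ioi 0, ENNReal.ofReal (u ^ (2 * γ + 1)) * ENNReal.ofReal (Wker γ s t u) :=
        lintegral_muGamma _ _
    _ = ∫⁻ u in Ioi 0, ENNReal.ofReal |2 * u / (4 * s * t)| *
          betaPDF (γ + 1 / 2) (γ + 1 / 2) (v u) := by
        refine setLIntegral_congr_fun_ae measurableSet_Ioi ?_
        filter_upwards [volume.ae_ne |s - t|, volume.ae_ne (s + t)] with u hu₁ hu₂ hu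
        have hu : 0 < u := hu
        rw [← ENNReal.ofReal_mul (by positivity), rpow_mul_Wker_eq hγ hs ht hu hu₁ hu₂,
          abs_of_pos (by positivity), ENNReal.ofReal_mul (by positivity)]
        rfl
    _ = ∫⁻ w in v '' Ioi 0, betaPDF (γ + 1 / 2) (γ + 1 / 2) w :=
        (lintegral_image_eq_lintegral_abs_deriv_mul measurableSet_Ioi hv' hinj _).symm
    _ = ∫⁻ w, betaPDF (γ + 1 / 2) (γ + 1 / 2) w := by
        rw [himage]
        refine setLIntegral_eq_of_support_subset fun w hw => ?_
        have hw : 0 < w := not_le.1 fun h => hw (betaPDF_eq_zero_of_nonpos h)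
        exact lt_of_le_of_lt (div_nonpos_of_nonpos_of_nonneg (by nlinarith) hst.le) hw
    _ = 1 := lintegral_betaPDF_eq_one (by linarith) (by linarith)

theorem Complex.enorm_ofReal_of_nonneg {x : ℝ} (hx : 0 ≤ x) :
    ‖(x : ℂ)‖ₑ = ENNReal.ofReal x := by
  rw [← ofReal_norm, Complex.norm_real, Real.norm_of_nonneg hx]

theorem Complex.enorm_exp_neg_I_mul_ofReal (x : ℝ) : ‖Complex.exp (-Complex.I * x)‖ₑ = 1 := by
  rw [neg_mul, ← mul_neg, ← Complex.ofReal_neg, enorm_exp_I_mul_ofReal]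

theorem enorm_qpTranslate_le (a b d : ℝ) {γ t s : ℝ} (hγ : γ > -(1 / 2)) (ht : 0 < t)
    (hs : 0 < s) (h : ℝ → ℂ) :
    ‖qpTranslate a b d γ t h s‖ₑ ≤ ∫⁻ u, ENNReal.ofReal (Wker γ s t u) * ‖h u‖ₑ ∂muGamma γ := by
  rw [lintegral_muGamma]
  refine (enorm_integral_le_lintegral_enorm _).trans_eq <|
    setLIntegral_congr_fun measurableSet_Ioi fun u (hu : 0 < u) => ?_
  simp only [Wabd, enorm_mul, enorm_exp_I_mul_ofReal, Complex.enorm_exp_neg_I_mul_ofReal,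
    Complex.enorm_ofReal_of_nonneg (Wker_nonneg hγ hs ht hu),
    Complex.enorm_ofReal_of_nonneg (Real.rpow_nonneg hu.le _)]
  ring

theorem aestronglyMeasurable_qpTranslate (a b d γ t : ℝ) {h : ℝ → ℂ}
    (hh : AEStronglyMeasurable h (muGamma γ)) :
    AEStronglyMeasurable (qpTranslate a b d γ t h) (muGamma γ) := by
  have hW : Measurable fun p : ℝ × ℝ => Wabd a b d γ p.1 t p.2 := by
    have := measurable_Wker γ t
    unfold Wabd
    fun_prop
  have hE : Measurable fun p : ℝ × ℝ =>
      Complex.exp (Complex.I * ((a * p.2 ^ 2 + d * p.2 : ℝ) : ℂ)) *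
        ((p.2 ^ (2 * γ + 1) : ℝ) : ℂ) := by
    fun_prop
  have hh' := (hh.mono_ac (absolutelyContinuous_muGamma γ)).comp_snd (μ := muGamma γ)
  have hf : AEStronglyMeasurable (fun p : ℝ × ℝ => h p.2 * Wabd a b d γ p.1 t p.2 *
      Complex.exp (Complex.I * ((a * p.2 ^ 2 + d * p.2 : ℝ) : ℂ)) *
      ((p.2 ^ (2 * γ + 1) : ℝ) : ℂ)) ((muGamma γ).prod (volume.restrict (Ioi 0))) := by
    convert hh'.mul (hW.mul hE).aestronglyMeasurable using 1
    ext p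
    simp only [Pi.mul_apply]
    ring
  exact hf.integral_prod_right'

theorem qpTranslate_eLpNorm_le_general (a b d γ : ℝ) (hγ : γ > -(1 / 2))
    (p : ℝ≥0∞) (hp : 1 ≤ p) (h : ℝ → ℂ) (hh : MemLp h p (muGamma γ)) :
    ∀ t ∈ Ioi (0 : ℝ),
      MemLp (qpTranslate a b d γ t h) p (muGamma γ) ∧
        eLpNorm (qpTranslate a b d γ t h) p (muGamma γ) ≤ eLpNorm h p (muGamma γ) := by
  intro t (ht : 0 < t)
  have hrow : ∀ᵐ s ∂muGamma γ, ∫⁻ u, ENNReal.ofReal (Wker γ s t u) ∂muGamma γ ≤ 1 := by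
    filter_upwards [ae_pos_muGamma γ] with s hs
    exact (lintegral_Wker_muGamma hγ hs ht).le
  have hcol : ∀ᵐ u ∂muGamma γ, ∫⁻ s, ENNReal.ofReal (Wker γ s t u) ∂muGamma γ ≤ 1 := by
    filter_upwards [ae_pos_muGamma γ] with u hu
    simp only [Wker_comm _ _ t u]
    exact (lintegral_Wker_muGamma hγ hu ht).le
  have hbound : ∀ᵐ s ∂muGamma γ, ‖qpTranslate a b d γ t h s‖ₑ ≤
      ∫⁻ u, ENNReal.ofReal (Wker γ s t u) * ‖h u‖ₑ ∂muGamma γ := by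
    filter_upwards [ae_pos_muGamma γ] with s hs
    exact enorm_qpTranslate_le a b d hγ ht hs h
  have hle := eLpNorm_le_of_enorm_le_lintegral_kernel (measurable_Wker γ t).ennreal_ofReal
    hrow hcol hh.1 hbound hp
  exact ⟨⟨aestronglyMeasurable_qpTranslate a b d γ t hh.1, hle.trans_lt hh.2⟩, hle⟩

/-- the generalized translation is an `L^p_γ → L^p_γ` contraction,
`1 ≤ p ≤ ∞`. -/
theorem qpTranslate_eLpNorm_le (a b d γ : ℝ) (hb : b ≠ 0) (hγ : γ > -(1 / 2))
    (p : ℝ≥0∞) (hp : 1 ≤ p) (h : ℝ → ℂ) (hh : MemLp h p (muGamma γ)) :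
    ∀ t ∈ Ioi (0 : ℝ),
      MemLp (qpTranslate a b d γ t h) p (muGamma γ) ∧
        eLpNorm (qpTranslate a b d γ t h) p (muGamma γ) ≤ eLpNorm h p (muGamma γ) :=
  qpTranslate_eLpNorm_le_general a b d γ hγ p hp h hh
end
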